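/- Let A be a commutative unital ring, let π be an ideal of A, and let n ≥ 3. For all x, y ∈ A, all z ∈ π² (the product ideal), and all indices k ≠ l, the (k,l)-suspension of the symbol S(x,y;z) lies in the commutator subgroup [F_n(π), F_n(π)]. -/

import Mathlib

open Matrix

/-- `SL n A` is the special linear group `SL_n(A)`. -/
abbrev SL (n : ℕ) (A : Type) [CommRing A] : Type := Matrix.SpecialLinearGroup (Fin n) A

/-- The elementary matrix `e_{ij}(a) = 1_n + a·e_{ij}` as an element of `SL_n(A)` (for `i ≠ j`). -/
def elem (A : Type) [CommRing A] {n : ℕ} (i j : Fin n) (hij : i ≠ j) (a : A) : SL n A :=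
  ⟨Matrix.transvection i j a, Matrix.det_transvection_of_ne i j hij a⟩

/-- The true elementary subgroup `F_n(π)`: the subgroup of `SL_n(A)` generated by the
elementary matrices with coefficients in the ideal `π`. -/
def Fgrp (A : Type) [CommRing A] (n : ℕ) (π : Ideal A) : Subgroup (SL n A) :=
  Subgroup.closure {x | ∃ (i j : Fin n) (hij : i ≠ j), ∃ a ∈ π, x = elem A i j hij a}

/-- The `(k,l)`-suspension of the symbol `S(x,y;z)`: the matrix obtained from the identity
matrix `1_n` by grafting `1+xyz` in the `(k,k)`-entry, `-x²z` in the `(k,l)`-entry,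
`y²z` in the `(l,k)`-entry and `1-xyz` in the `(l,l)`-entry. -/
def suspMat (A : Type) [CommRing A] {n : ℕ} (k l : Fin n) (x y z : A) :
    Matrix (Fin n) (Fin n) A := fun p q =>
  if p = k ∧ q = k then 1 + x * y * z
  else if p = k ∧ q = l then -(x ^ 2 * z)
  else if p = l ∧ q = k then y ^ 2 * z
  else if p = l ∧ q = l then 1 - x * y * z
  else if p = q then 1 else 0

lemma suspMat_eq (A : Type) [CommRing A] {n : ℕ} (k l : Fin n) (hkl : k ≠ l) (x y z : A) :
    suspMat A k l x y z =
      1 + Matrix.replicateCol (Fin 1) (fun p => if p = k then x * z else if p = l then y * z else 0) *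
        Matrix.replicateRow (Fin 1) (fun q => if q = k then y else if q = l then -x else 0) := by
  ext p q
  simp only [suspMat, Matrix.add_apply, Matrix.mul_apply, Matrix.replicateCol_apply, Matrix.replicateRow_apply,
    Finset.univ_unique, Finset.sum_singleton, Matrix.one_apply]
  split_ifs <;> simp_all <;> ring

lemma suspMat_det (A : Type) [CommRing A] {n : ℕ} (k l : Fin n) (hkl : k ≠ l) (x y z : A) :
    (suspMat A k l x y z).det = 1 := by
  rw [suspMat_eq A k l hkl]
  erw [Matrix.det_one_add_replicateCol_mul_replicateRow (ι := Fin 1)]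
  have : (fun q => if q = k then y else if q = l then -x else 0) ⬝ᵥ
      (fun p => if p = k then x * z else if p = l then y * z else 0) = 0 := by
    unfold dotProduct
    have h : ∀ q : Fin n, (if q = k then y else if q = l then -x else 0) *
        (if q = k then x * z else if q = l then y * z else 0)
        = (if q = k then y * (x * z) else 0) + (if q = l then -x * (y * z) else 0) := by
      intro q
      split_ifs with h1 h2 <;> simp_all
    simp only [h, Finset.sum_add_distrib, Finset.sum_ite_eq', Finset.mem_univ, if_true]
    ring
  rw [this, add_zero]

/-- The `(k,l)`-suspension of the symbol `S(x,y;z)` as an element of `SL_n(A)` (for `k ≠ l`). -/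
def suspS (A : Type) [CommRing A] {n : ℕ} (k l : Fin n) (hkl : k ≠ l) (x y z : A) : SL n A :=
  ⟨suspMat A k l x y z, suspMat_det A k l hkl x y z⟩

/-!
Pick an index `m ∉ {k, l}`. In coordinates `k, l` put `u = (x, y)` and `v = (y, -x)`, so that
`S(x,y;z) = 1 + z • u vᵀ` and `vᵀ u = 0`. For `a, b ∈ π` the matrices
`E = e_{km}(ax) e_{lm}(ay) = 1 + a • u eₘᵀ` and `F = e_{mk}(by) e_{ml}(-bx) = 1 + b • eₘ vᵀ` lie in
`F_n(π)`, and because `vᵀ u = 0 = vₘ` one gets `E F = S(x,y;ab) F E`, i.e. `S(x,y;ab) = [E, F]`.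
The same orthogonality makes `z ↦ S(x,y;z)` turn sums into products, which covers all of `π²`.
-/

open scoped commutatorElement

section RingIdentities

variable {R : Type*} [Ring R] {a b : R}

theorem one_add_mul_one_add_of_mul_eq_zero (h : a * b = 0) :
    (1 + a) * (1 + b) = 1 + (a + b) := by
  rw [add_mul, one_mul, mul_one_add, h, add_zero]
  abel

theorem one_add_mul_one_add_eq_mul_swap (hba : b * a = 0) (hbb : b * b = 0) :
    (1 + a) * (1 + b) = (1 + a * b) * ((1 + b) * (1 + a)) := by
  have habx : a * b * (b + a) = 0 := by rw [mul_assoc, mul_add, hbb, hba, add_zero, mul_zero]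
  calc (1 + a) * (1 + b) = 1 + (b + a) + a * b + a * b * (b + a) := by
        rw [habx, add_zero]; noncomm_ring
    _ = (1 + a * b) * (1 + (b + a)) := by noncomm_ring
    _ = (1 + a * b) * ((1 + b) * (1 + a)) := by rw [one_add_mul_one_add_of_mul_eq_zero hba]

end RingIdentities

theorem commutatorElement_eq_of_mul_eq {G : Type*} [Group G] {g h s : G}
    (H : g * h = s * (h * g)) : ⁅g, h⁆ = s := by
  rw [commutatorElement_def, H]
  group

section SingleVecMulVec

variable {ι α : Type*} [DecidableEq ι] [MulZeroOneClass α]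

theorem single_eq_vecMulVec_single_left (i j : ι) (c : α) :
    single i j c = vecMulVec (Pi.single i c) (Pi.single j 1) := by
  ext p q
  simp only [single_apply, vecMulVec_apply, Pi.single_apply]
  split_ifs <;> simp_all

theorem single_eq_vecMulVec_single_right (i j : ι) (c : α) :
    single i j c = vecMulVec (Pi.single i 1) (Pi.single j c) := by
  ext p q
  simp only [single_apply, vecMulVec_apply, Pi.single_apply]
  split_ifs <;> simp_all

end SingleVecMulVec

section RankOne

variable {ι A : Type*} [Fintype ι] [DecidableEq ι] [Ring A]

theorem one_add_vecMulVec_mul_one_add_vecMulVec {u v w x : ι → A} (h : v ⬝ᵥ w = 0) :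
    (1 + vecMulVec u v) * (1 + vecMulVec w x) = 1 + (vecMulVec u v + vecMulVec w x) :=
  one_add_mul_one_add_of_mul_eq_zero <| by
    rw [vecMulVec_mul_vecMulVec, h, zero_smul, vecMulVec_zero]

theorem one_add_vecMulVec_single_mul_eq_mul_swap {u w : ι → A} {m : ι} (hw : w m = 0)
    (hwu : w ⬝ᵥ u = 0) :
    (1 + vecMulVec u (Pi.single m 1)) * (1 + vecMulVec (Pi.single m 1) w) =
      (1 + vecMulVec u w) *
        ((1 + vecMulVec (Pi.single m 1) w) * (1 + vecMulVec u (Pi.single m 1))) := by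
  have hXY : vecMulVec u (Pi.single m 1) * vecMulVec (Pi.single m 1) w = vecMulVec u w := by
    rw [vecMulVec_mul_vecMulVec, dotProduct_single, Pi.single_eq_same, one_mul, one_smul]
  rw [← hXY]
  refine one_add_mul_one_add_eq_mul_swap ?_ ?_ <;>
    rw [vecMulVec_mul_vecMulVec] <;> simp [hw, hwu, dotProduct_single]

end RankOne

section Transvection

variable {ι A : Type*} [Fintype ι] [DecidableEq ι] [CommRing A]

theorem transvection_mul_transvection_same_col {i i' j : ι} (h : j ≠ i') (c d : A) :
    transvection i j c * transvection i' j d =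
      1 + vecMulVec (Pi.single i c + Pi.single i' d) (Pi.single j 1) := by
  rw [transvection, transvection, single_eq_vecMulVec_single_left,
    single_eq_vecMulVec_single_left, one_add_vecMulVec_mul_one_add_vecMulVec (by simp [h]),
    add_vecMulVec]

theorem transvection_mul_transvection_same_row {i j j' : ι} (h : j ≠ i) (c d : A) :
    transvection i j c * transvection i j' d =
      1 + vecMulVec (Pi.single i 1) (Pi.single j c + Pi.single j' d) := by
  rw [transvection, transvection, single_eq_vecMulVec_single_right,
    single_eq_vecMulVec_single_right, one_add_vecMulVec_mul_one_add_vecMulVec (by simp [h]),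
    vecMulVec_add]

theorem single_add_single_dotProduct_eq_zero {k l : ι} (hkl : k ≠ l) (x y : A) :
    (Pi.single k y + Pi.single l (-x) : ι → A) ⬝ᵥ (Pi.single k x + Pi.single l y) = 0 := by
  simp [dotProduct_add, hkl, hkl.symm, mul_comm]

end Transvection

section Suspension

variable {A : Type} [CommRing A] {n : ℕ} {k l : Fin n}

theorem suspMat_eq_one_add_vecMulVec (hkl : k ≠ l) (x y z : A) :
    suspMat A k l x y z =
      1 + vecMulVec (z • (Pi.single k x + Pi.single l y)) (Pi.single k y + Pi.single l (-x)) := by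
  ext p q
  simp only [suspMat, Matrix.add_apply, one_apply, vecMulVec_apply, Pi.smul_apply, Pi.add_apply,
    Pi.single_apply, smul_eq_mul]
  split_ifs <;> simp_all <;> ring

@[simp]
theorem coe_suspS (hkl : k ≠ l) (x y z : A) :
    (suspS A k l hkl x y z : Matrix (Fin n) (Fin n) A) = suspMat A k l x y z :=
  rfl

@[simp]
theorem coe_elem {i j : Fin n} (hij : i ≠ j) (a : A) :
    (elem A i j hij a : Matrix (Fin n) (Fin n) A) = transvection i j a :=
  rfl

theorem suspS_add (hkl : k ≠ l) (x y z w : A) :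
    suspS A k l hkl x y (z + w) = suspS A k l hkl x y z * suspS A k l hkl x y w := by
  apply SpecialLinearGroup.coeMonoidHom_injective
  simp only [map_mul, SpecialLinearGroup.coeMonoidHom_apply, coe_suspS]
  rw [suspMat_eq_one_add_vecMulVec hkl, suspMat_eq_one_add_vecMulVec hkl,
    suspMat_eq_one_add_vecMulVec hkl, one_add_vecMulVec_mul_one_add_vecMulVec
      (by rw [dotProduct_smul, single_add_single_dotProduct_eq_zero hkl, smul_zero]),
    add_smul, add_vecMulVec]

theorem elem_mem_Fgrp {π : Ideal A} {i j : Fin n} (hij : i ≠ j) {a : A} (ha : a ∈ π) :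
    elem A i j hij a ∈ Fgrp A n π :=
  Subgroup.subset_closure ⟨i, j, hij, a, ha, rfl⟩

theorem suspS_mul_eq_commutatorElement {m : Fin n} (hkl : k ≠ l) (hkm : k ≠ m) (hlm : l ≠ m)
    (x y a b : A) :
    suspS A k l hkl x y (a * b) =
      ⁅elem A k m hkm (a * x) * elem A l m hlm (a * y),
        elem A m k hkm.symm (b * y) * elem A m l hlm.symm (-(b * x))⁆ := by
  refine (commutatorElement_eq_of_mul_eq (SpecialLinearGroup.coeMonoidHom_injective ?_)).symm
  simp only [map_mul, SpecialLinearGroup.coeMonoidHom_apply, coe_suspS, coe_elem]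
  rw [transvection_mul_transvection_same_col hlm.symm,
    transvection_mul_transvection_same_row hkm, suspMat_eq_one_add_vecMulVec hkl]
  set u : Fin n → A := Pi.single k x + Pi.single l y
  set v : Fin n → A := Pi.single k y + Pi.single l (-x)
  have hu : Pi.single k (a * x) + Pi.single l (a * y) = a • u := by
    simp only [u, smul_add, ← Pi.single_smul', smul_eq_mul]
  have hv : Pi.single k (b * y) + Pi.single l (-(b * x)) = b • v := by
    simp only [v, smul_add, ← Pi.single_smul', smul_eq_mul, mul_neg]
  have huv : vecMulVec ((a * b) • u) v = vecMulVec (a • u) (b • v) := by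
    rw [smul_vecMulVec, smul_vecMulVec, vecMulVec_smul, mul_smul]
  rw [hu, hv, huv]
  refine one_add_vecMulVec_single_mul_eq_mul_swap ?_ ?_
  · simp [v, hkm.symm, hlm.symm]
  · rw [smul_dotProduct, dotProduct_smul, single_add_single_dotProduct_eq_zero hkl, smul_zero,
      smul_zero]

end Suspension

/-- For `n ≥ 3`, `x, y ∈ A`, `z ∈ π²` and `k ≠ l`, the `(k,l)`-suspension of the symbol
`S(x,y;z)` lies in the commutator subgroup `[F_n(π), F_n(π)]`. -/
theorem suspension_mem_commutator (A : Type) [CommRing A] (π : Ideal A) (n : ℕ)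
    (hn : 3 ≤ n) (x y z : A) (hz : z ∈ π ^ 2) (k l : Fin n) (hkl : k ≠ l) :
    suspS A k l hkl x y z ∈ ⁅Fgrp A n π, Fgrp A n π⁆ := by
  obtain ⟨m, hmk, hml⟩ := Fin.exists_ne_and_ne_of_two_lt k l (by omega)
  rw [sq] at hz
  refine Submodule.mul_induction_on hz (fun a ha b hb => ?_) (fun z w hz hw => ?_)
  · rw [suspS_mul_eq_commutatorElement hkl hmk.symm hml.symm]
    exact Subgroup.commutator_mem_commutator
      (mul_mem (elem_mem_Fgrp _ (π.mul_mem_right x ha)) (elem_mem_Fgrp _ (π.mul_mem_right y ha)))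
      (mul_mem (elem_mem_Fgrp _ (π.mul_mem_right y hb))
        (elem_mem_Fgrp _ (neg_mem (π.mul_mem_right x hb))))
  · rw [suspS_add]
    exact mul_mem hz hw
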